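/- arXiv:1905.02445 — 3 statements merged into one kernel-verified Lean document; each statement's English description precedes it below -/
import Mathlib

section
/- Let G ⊆ K_{m,n} be a connected bipartite graph and let A = A₁ ⊔ A₂ be a two-sided maximal independent set. Then H_{A₁} ∩ σ_G^∨ = H_{A₂} ∩ σ_G^∨; that is, a point x ∈ σ_G^∨ satisfies Σ_{v∈A₁} x_v = Σ_{v∈N(A₁)} x_v if and only if it satisfies Σ_{v∈A₂} x_v = Σ_{v∈N(A₂)} x_v. -/
/-!
Common setup: a bipartite graph `G ⊆ K_{m,n}` is encoded by an edge relation
`E : Fin m → Fin n → Prop` (vertex set `V = Fin m ⊕ Fin n`, with `U₁` the left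
summand and `U₂` the right summand).
-/

namespace ToricBipartite

open Sum Finset

variable {m n : ℕ}

/-- The simple graph on `Fin m ⊕ Fin n` determined by the bipartite edge relation `E`. -/
def toGraph (E : Fin m → Fin n → Prop) : SimpleGraph (Fin m ⊕ Fin n) where
  Adj u v :=
    (∃ i j, u = inl i ∧ v = inr j ∧ E i j) ∨ (∃ i j, u = inr j ∧ v = inl i ∧ E i j)
  symm := by
    constructor
    rintro u v (⟨i, j, hu, hv, h⟩ | ⟨i, j, hu, hv, h⟩)
    · exact Or.inr ⟨i, j, hv, hu, h⟩
    · exact Or.inl ⟨i, j, hv, hu, h⟩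
  loopless := by
    constructor
    rintro u (⟨i, j, hu, hv, h⟩ | ⟨i, j, hu, hv, h⟩) <;> rw [hu] at hv <;> simp at hv

/-- The generator `e^i + f^j` of the dual edge cone. -/
def gen (i : Fin m) (j : Fin n) : (Fin m ⊕ Fin n) → ℝ :=
  Pi.single (inl i) 1 + Pi.single (inr j) 1

/-- The set of generators `{e^i + f^j : (i, m+j) ∈ E(G)}` of the dual edge cone. -/
def genSet (E : Fin m → Fin n → Prop) : Set ((Fin m ⊕ Fin n) → ℝ) :=
  {x | ∃ i j, E i j ∧ x = gen i j}

/-- The dual edge cone `σ_G^∨ ⊆ ℝ^{m+n}`: all nonnegative combinations of the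
generators `e^i + f^j` over the edges of `G`. -/
def dualEdgeCone (E : Fin m → Fin n → Prop) : Set ((Fin m ⊕ Fin n) → ℝ) :=
  {x | ∃ c : Fin m → Fin n → ℝ, (∀ i j, 0 ≤ c i j) ∧ (∀ i j, c i j ≠ 0 → E i j) ∧
      x = ∑ i, ∑ j, c i j • gen i j}

/-- The neighbour set `N(A) ⊆ U₂` of a set `A ⊆ U₁`. -/
def nbrR (E : Fin m → Fin n → Prop) [∀ i j, Decidable (E i j)]
    (A : Finset (Fin m)) : Finset (Fin n) :=
  univ.filter fun j => ∃ i ∈ A, E i j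

/-- The neighbour set `N(B) ⊆ U₁` of a set `B ⊆ U₂`. -/
def nbrL (E : Fin m → Fin n → Prop) [∀ i j, Decidable (E i j)]
    (B : Finset (Fin n)) : Finset (Fin m) :=
  univ.filter fun i => ∃ j ∈ B, E i j

/-- `A₁ ⊔ A₂ ⊆ U₁ ⊔ U₂` contains no pair of adjacent vertices (since the graph is
bipartite this says there is no edge between `A₁` and `A₂`). -/
def IsIndepPair (E : Fin m → Fin n → Prop)
    (A₁ : Finset (Fin m)) (A₂ : Finset (Fin n)) : Prop :=
  ∀ i ∈ A₁, ∀ j ∈ A₂, ¬ E i j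

/-- A two-sided independent set `B₁ ⊔ B₂`, with `∅ ≠ B₁ ⊊ U₁` and `∅ ≠ B₂ ⊊ U₂`. -/
def TwoSidedIndep (E : Fin m → Fin n → Prop)
    (B₁ : Finset (Fin m)) (B₂ : Finset (Fin n)) : Prop :=
  B₁.Nonempty ∧ B₁ ≠ univ ∧ B₂.Nonempty ∧ B₂ ≠ univ ∧ IsIndepPair E B₁ B₂

/-- A two-sided *maximal* independent set: two-sided independent, and contained in no
strictly larger independent set of the graph. -/
def TwoSidedMaxIndep (E : Fin m → Fin n → Prop)
    (A₁ : Finset (Fin m)) (A₂ : Finset (Fin n)) : Prop :=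
  TwoSidedIndep E A₁ A₂ ∧
    ∀ B₁ B₂, IsIndepPair E B₁ B₂ → A₁ ⊆ B₁ → A₂ ⊆ B₂ → B₁ = A₁ ∧ B₂ = A₂

/-- Membership in `I_G^(*)`: either a two-sided maximal independent set, or a one-sided
independent set of the form `U_i ∖ {v}` not contained in any two-sided independent set.
A set is encoded as the pair of its parts `(A₁, A₂) = (A ∩ U₁, A ∩ U₂)`. -/
def InIStar (E : Fin m → Fin n → Prop)
    (A₁ : Finset (Fin m)) (A₂ : Finset (Fin n)) : Prop :=
  TwoSidedMaxIndep E A₁ A₂ ∨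
    (A₂ = ∅ ∧ A₁.Nonempty ∧ (∃ v, A₁ = {v}ᶜ) ∧
      ¬ ∃ B₁ B₂, TwoSidedIndep E B₁ B₂ ∧ A₁ ⊆ B₁) ∨
    (A₁ = ∅ ∧ A₂.Nonempty ∧ (∃ v, A₂ = {v}ᶜ) ∧
      ¬ ∃ B₁ B₂, TwoSidedIndep E B₁ B₂ ∧ A₂ ⊆ B₂)

/-- The edge relation of the associated (spanning) subgraph `G{A}` of `A ∈ I_G^(*)`:
for one-sided `A = A₁ ⊆ U₁` the edges of `G[A₁ ⊔ N(A₁)] ⊔ G[(U₁∖A₁) ⊔ (U₂∖N(A₁))]`,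
symmetrically for one-sided `A = A₂ ⊆ U₂`, and for two-sided `A = A₁ ⊔ A₂` the edges of
`G[A₁ ⊔ N(A₁)] ⊔ G[A₂ ⊔ N(A₂)]`. -/
def assoc (E : Fin m → Fin n → Prop) [∀ i j, Decidable (E i j)]
    (A₁ : Finset (Fin m)) (A₂ : Finset (Fin n)) : Fin m → Fin n → Prop := fun i j =>
  E i j ∧
    (if A₂ = ∅ then i ∈ A₁ ∨ j ∉ nbrR E A₁
     else if A₁ = ∅ then j ∈ A₂ ∨ i ∉ nbrL E A₂
     else i ∈ A₁ ∨ j ∈ A₂)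

instance (E : Fin m → Fin n → Prop) [∀ i j, Decidable (E i j)]
    (A₁ : Finset (Fin m)) (A₂ : Finset (Fin n)) (i : Fin m) (j : Fin n) :
    Decidable (assoc E A₁ A₂ i j) := by
  unfold assoc; infer_instance

/-- The number of connected components of the bipartite graph with edge relation `E`
(isolated vertices count as connected components). -/
noncomputable def numComponents (E : Fin m → Fin n → Prop) : ℕ :=
  Nat.card (toGraph E).ConnectedComponent

/-- `A ∈ I_G^(1)`: a first independent set, i.e. an element of `I_G^(*)` whose associated
subgraph `G{A}` has exactly two connected components. -/
def FirstIndep (E : Fin m → Fin n → Prop) [∀ i j, Decidable (E i j)]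
    (A₁ : Finset (Fin m)) (A₂ : Finset (Fin n)) : Prop :=
  InIStar E A₁ A₂ ∧ numComponents (assoc E A₁ A₂) = 2

/-- The supporting hyperplane `H_{A₁}` of a one-sided set `A₁ ⊆ U₁`:
`Σ_{v ∈ A₁} x_v = Σ_{v ∈ N(A₁)} x_v`. -/
def hyp1 (E : Fin m → Fin n → Prop) [∀ i j, Decidable (E i j)]
    (A₁ : Finset (Fin m)) : Set ((Fin m ⊕ Fin n) → ℝ) :=
  {x | ∑ i ∈ A₁, x (inl i) = ∑ j ∈ nbrR E A₁, x (inr j)}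

/-- The supporting hyperplane `H_{A₂}` of a one-sided set `A₂ ⊆ U₂`. -/
def hyp2 (E : Fin m → Fin n → Prop) [∀ i j, Decidable (E i j)]
    (A₂ : Finset (Fin n)) : Set ((Fin m ⊕ Fin n) → ℝ) :=
  {x | ∑ j ∈ A₂, x (inr j) = ∑ i ∈ nbrL E A₂, x (inl i)}

/-- The supporting hyperplane `H_A` of `A = A₁ ⊔ A₂`, taken with respect to a nonempty
one-sided part of `A`. -/
def hypA (E : Fin m → Fin n → Prop) [∀ i j, Decidable (E i j)]
    (A₁ : Finset (Fin m)) (A₂ : Finset (Fin n)) : Set ((Fin m ⊕ Fin n) → ℝ) :=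
  if A₁ = ∅ then hyp2 E A₂ else hyp1 E A₁

/-- Connectivity of the induced subgraph `G[S ⊔ T]` for `S ⊆ U₁`, `T ⊆ U₂`. -/
def InducedConnected (E : Fin m → Fin n → Prop)
    (S : Finset (Fin m)) (T : Finset (Fin n)) : Prop :=
  ((toGraph E).induce
    ((inl '' (S : Set (Fin m)) ∪ inr '' (T : Set (Fin n))) : Set (Fin m ⊕ Fin n))).Connected

/-- The degree (valency) sequence of the bipartite graph with edge relation `E`,
as a vector in `ℝ^{m+n}`. -/
def valVec (E : Fin m → Fin n → Prop) [∀ i j, Decidable (E i j)] :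
    (Fin m ⊕ Fin n) → ℝ :=
  Sum.elim (fun i => ((univ.filter fun j => E i j).card : ℝ))
    (fun j => ((univ.filter fun i => E i j).card : ℝ))

/-!
Write a point of the cone as `x = Σ c_{ij} (e^i + f^j)` with `c` supported on the edges.
For any `S ⊆ U₁`, the mass `Σ_{S} x` only uses edges from `S` to `N(S)`, while `Σ_{N(S)} x`
also counts the edges from `U₁ ∖ S` to `N(S)`; so `x ∈ H_S` iff `c` vanishes on those edges,
and symmetrically for `T ⊆ U₂`. Maximality of `A₁ ⊔ A₂` gives `N(A₁) = U₂ ∖ A₂` and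
`N(A₂) = U₁ ∖ A₁`, so both conditions say that `c` vanishes on the edges between
`U₁ ∖ A₁` and `U₂ ∖ A₂`.
-/

theorem sum_rows_eq_sum_cols_iff {α β M : Type*} [Fintype α] [Fintype β] [DecidableEq α]
    [AddCancelCommMonoid M] (c : α → β → M) (S : Finset α) (T : Finset β)
    (hc : ∀ i ∈ S, ∀ j ∉ T, c i j = 0) :
    ∑ i ∈ S, ∑ j, c i j = ∑ j ∈ T, ∑ i, c i j ↔ ∑ i ∈ Sᶜ, ∑ j ∈ T, c i j = 0 := by
  have rows : ∑ i ∈ S, ∑ j, c i j = ∑ j ∈ T, ∑ i ∈ S, c i j := by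
    rw [sum_comm (s := T)]
    refine sum_congr rfl fun i hi => ?_
    exact (sum_subset (subset_univ T) fun j _ hj => hc i hi j hj).symm
  have cols : ∑ j ∈ T, ∑ i, c i j =
      ∑ j ∈ T, ∑ i ∈ S, c i j + ∑ i ∈ Sᶜ, ∑ j ∈ T, c i j := by
    rw [sum_comm (s := Sᶜ), ← sum_add_distrib]
    exact sum_congr rfl fun j _ => (sum_add_sum_compl S _).symm
  rw [rows, cols, left_eq_add]

variable {E : Fin m → Fin n → Prop} [∀ i j, Decidable (E i j)]

theorem sum_smul_gen_inl (c : Fin m → Fin n → ℝ) (i : Fin m) :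
    (∑ i', ∑ j, c i' j • gen i' j) (inl i) = ∑ j, c i j := by
  simp [Finset.sum_apply, gen, Pi.single_apply]

theorem sum_smul_gen_inr (c : Fin m → Fin n → ℝ) (j : Fin n) :
    (∑ i, ∑ j', c i j' • gen i j') (inr j) = ∑ i, c i j := by
  rw [sum_comm]
  simp [Finset.sum_apply, gen, Pi.single_apply]

theorem sum_smul_gen_mem_hyp1_iff {c : Fin m → Fin n → ℝ} (hc : ∀ i j, c i j ≠ 0 → E i j)
    (S : Finset (Fin m)) :
    ∑ i, ∑ j, c i j • gen i j ∈ hyp1 E S ↔ ∑ i ∈ Sᶜ, ∑ j ∈ nbrR E S, c i j = 0 := by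
  simp only [hyp1, Set.mem_ofPred_eq, sum_smul_gen_inl, sum_smul_gen_inr]
  refine sum_rows_eq_sum_cols_iff c S _ fun i hi j hj => ?_
  by_contra h
  exact hj (mem_filter.2 ⟨mem_univ j, i, hi, hc i j h⟩)

theorem sum_smul_gen_mem_hyp2_iff {c : Fin m → Fin n → ℝ} (hc : ∀ i j, c i j ≠ 0 → E i j)
    (T : Finset (Fin n)) :
    ∑ i, ∑ j, c i j • gen i j ∈ hyp2 E T ↔ ∑ j ∈ Tᶜ, ∑ i ∈ nbrL E T, c i j = 0 := by
  simp only [hyp2, Set.mem_ofPred_eq, sum_smul_gen_inl, sum_smul_gen_inr]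
  refine sum_rows_eq_sum_cols_iff (fun j i => c i j) T _ fun j hj i hi => ?_
  by_contra h
  exact hi (mem_filter.2 ⟨mem_univ i, j, hj, hc i j h⟩)

section Maximal

variable {A₁ : Finset (Fin m)} {A₂ : Finset (Fin n)} (hind : IsIndepPair E A₁ A₂)
  (hmax : ∀ B₁ B₂, IsIndepPair E B₁ B₂ → A₁ ⊆ B₁ → A₂ ⊆ B₂ → B₁ = A₁ ∧ B₂ = A₂)
include hind hmax

theorem nbrR_eq_compl_of_maximal : nbrR E A₁ = A₂ᶜ := by
  ext j
  simp only [nbrR, mem_filter, mem_univ, true_and, mem_compl]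
  refine ⟨fun ⟨i, hi, hij⟩ hj => hind i hi j hj hij, fun hj => ?_⟩
  by_contra! hnone
  have hind' : IsIndepPair E A₁ (insert j A₂) := by
    intro i hi j' hj'
    rcases mem_insert.1 hj' with rfl | hj'
    exacts [hnone i hi, hind i hi j' hj']
  have hA₂ := (hmax A₁ _ hind' subset_rfl (subset_insert j A₂)).2
  exact hj (hA₂ ▸ mem_insert_self j A₂)

theorem nbrL_eq_compl_of_maximal : nbrL E A₂ = A₁ᶜ := by
  ext i
  simp only [nbrL, mem_filter, mem_univ, true_and, mem_compl]
  refine ⟨fun ⟨j, hj, hij⟩ hi => hind i hi j hj hij, fun hi => ?_⟩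
  by_contra! hnone
  have hind' : IsIndepPair E (insert i A₁) A₂ := by
    intro i' hi' j hj
    rcases mem_insert.1 hi' with rfl | hi'
    exacts [hnone j hj, hind i' hi' j hj]
  have hA₁ := (hmax _ A₂ hind' (subset_insert i A₁) subset_rfl).1
  exact hi (hA₁ ▸ mem_insert_self i A₁)

end Maximal

theorem hyp_inter_cone_symm_general (m n : ℕ) (E : Fin m → Fin n → Prop)
    [∀ i j, Decidable (E i j)]
    (A₁ : Finset (Fin m)) (A₂ : Finset (Fin n)) (hA : TwoSidedMaxIndep E A₁ A₂) :
    hyp1 E A₁ ∩ dualEdgeCone E = hyp2 E A₂ ∩ dualEdgeCone E := by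
  obtain ⟨⟨-, -, -, -, hind⟩, hmax⟩ := hA
  have hyp_iff : ∀ x ∈ dualEdgeCone E, x ∈ hyp1 E A₁ ↔ x ∈ hyp2 E A₂ := by
    rintro _ ⟨c, -, hc, rfl⟩
    rw [sum_smul_gen_mem_hyp1_iff hc, sum_smul_gen_mem_hyp2_iff hc,
      nbrR_eq_compl_of_maximal hind hmax, nbrL_eq_compl_of_maximal hind hmax, sum_comm]
  ext x
  exact and_congr_left (hyp_iff x)

/-- For a two-sided maximal independent set `A = A₁ ⊔ A₂` of a connected
bipartite graph `G ⊆ K_{m,n}`, the two supporting hyperplanes cut out the same face: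
`H_{A₁} ∩ σ_G^∨ = H_{A₂} ∩ σ_G^∨`. -/
theorem hyp_inter_cone_symm (m n : ℕ) (E : Fin m → Fin n → Prop)
    [∀ i j, Decidable (E i j)] (hconn : (toGraph E).Connected)
    (A₁ : Finset (Fin m)) (A₂ : Finset (Fin n)) (hA : TwoSidedMaxIndep E A₁ A₂) :
    hyp1 E A₁ ∩ dualEdgeCone E = hyp2 E A₂ ∩ dualEdgeCone E :=
  hyp_inter_cone_symm_general m n E A₁ A₂ hA

end ToricBipartite
end

section
/- Let G ⊆ K_{m,n} be a connected bipartite graph and let A = A₁ ⊔ A₂ ∈ I_G^(*) with A₁ ⊆ U₁ nonempty (A₂ ⊆ U₂ possibly empty). Suppose the induced subgraph G[A₁ ⊔ N(A₁)] has exactly d connected components with vertex sets X_i ⊔ N(X_i) (X_i ⊆ A₁, N(X_i) ⊆ N(A₁)) for i = 1,…,d, that the induced subgraph G[(U₁ ∖ A₁) ⊔ (U₂ ∖ N(A₁))] is connected, and that A₂ ≠ ∅ or d ≥ 2. Then for each i ∈ {1,…,d}, the set C^i := X_i ⊔ (A₂ ∪ ⋃_{j≠i} N(X_j)) is a two-sided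 maximal independent set of G whose associated subgraph G{C^i} has exactly two connected components; that is, C^i is a first independent set of G. -/
/-!
Write `S = X i`. Since `A ∈ I_G^(*)` forces `A₂ = N(A₁)ᶜ` and the `N(X j)` are disjoint,
`C^i = S ⊔ N(S)ᶜ`. Such a set is a maximal independent set as soon as every vertex outside `S`
has a neighbour outside `N(S)`: for a vertex of another `X j` any neighbour will do, for a vertex
outside `A₁` a neighbour in `A₂` does, and in the one-sided case `A₁ = U₁ ∖ {v}` the vertex `v`
is the endpoint of an edge leaving some `X j ⊔ N(X j)` with `j ≠ i`, which exists as `G` is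
connected. The associated subgraph of `S ⊔ N(S)ᶜ` has no edge between `S ⊔ N(S)` and its
complement and contains every edge of `G` inside either part, so it has exactly two components:
`G[S ⊔ N(S)]` is connected, and `G[Sᶜ ⊔ N(S)ᶜ]` is the connected graph `G[A₁ᶜ ⊔ N(A₁)ᶜ]` with
the connected pieces `X j ⊔ N(X j)`, `j ≠ i`, attached to it by edges.
-/

namespace SimpleGraph

variable {V : Type*} {G H : SimpleGraph V}

lemma Reachable.mem_iff_of_forall_adj {W : Set V} (hW : ∀ u v, G.Adj u v → (u ∈ W ↔ v ∈ W))
    {u v : V} (h : G.Reachable u v) : u ∈ W ↔ v ∈ W := by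
  obtain ⟨p⟩ := h
  induction p with
  | nil => rfl
  | cons hadj _ ih => exact (hW _ _ hadj).trans ih

lemma Connected.reachable_of_induce {W : Set V} (h : (G.induce W).Connected) {u v : V}
    (hu : u ∈ W) (hv : v ∈ W) : G.Reachable u v := by
  simpa using (h.preconnected ⟨u, hu⟩ ⟨v, hv⟩).map (Embedding.induce W).toHom

lemma Connected.induce_mono {W : Set V} (h : (G.induce W).Connected)
    (hGH : ∀ u ∈ W, ∀ v ∈ W, G.Adj u v → H.Adj u v) : (H.induce W).Connected :=
  h.mono fun ⟨u, hu⟩ ⟨v, hv⟩ huv => hGH u hu v hv huv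

lemma natCard_connectedComponent_eq_two {W : Set V} (hW : ∀ u v, G.Adj u v → (u ∈ W ↔ v ∈ W))
    (h₁ : (G.induce W).Connected) (h₂ : (G.induce Wᶜ).Connected) :
    Nat.card G.ConnectedComponent = 2 := by
  obtain ⟨⟨a, ha⟩⟩ := h₁.nonempty
  obtain ⟨⟨b, hb⟩⟩ := h₂.nonempty
  rw [Nat.card_eq_two_iff]
  refine ⟨G.connectedComponentMk a, G.connectedComponentMk b, fun hab => hb ?_, ?_⟩
  · exact ((ConnectedComponent.exact hab).mem_iff_of_forall_adj hW).mp ha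
  · ext c
    induction c using ConnectedComponent.ind with | h v => ?_
    by_cases hv : v ∈ W
    · simpa using Or.inl (ConnectedComponent.sound (h₁.reachable_of_induce hv ha))
    · simpa using Or.inr (ConnectedComponent.sound (h₂.reachable_of_induce hv hb))

lemma induce_union_biUnion_connected {ι : Type*} {s : Set ι} {R : Set V} {P : ι → Set V}
    (hR : (G.induce R).Connected) (hP : ∀ k ∈ s, (G.induce (P k)).Preconnected)
    (hadj : ∀ k ∈ s, ∃ u ∈ R, ∃ v ∈ P k, G.Adj u v) :
    (G.induce (R ∪ ⋃ k ∈ s, P k)).Connected := by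
  obtain ⟨⟨r, hr⟩⟩ := hR.nonempty
  refine G.induce_connected_of_patches r (Or.inl hr) fun {v} hv => ?_
  rcases hv with hv | hv
  · exact ⟨R, Set.subset_union_left, hr, hv, hR.preconnected _ _⟩
  · obtain ⟨k, hk, hvk⟩ := Set.mem_iUnion₂.mp hv
    obtain ⟨u, hu, w, hw, huw⟩ := hadj k hk
    refine ⟨R ∪ P k, Set.union_subset_union_right R (Set.subset_biUnion_of_mem hk),
      Or.inl hr, Or.inr hvk, ?_⟩
    exact (connected_induce_union hR.preconnected (hP k hk) hu hw huw).preconnected _ _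

end SimpleGraph

namespace Finset

open Function

lemma compl_eq_compl_biUnion_union_biUnion_erase {α ι : Type*} [Fintype α]
    [DecidableEq α] [Fintype ι] [DecidableEq ι] {F : ι → Finset α}
    (hF : Pairwise (Disjoint on F)) (k : ι) :
    (F k)ᶜ = (univ.biUnion F)ᶜ ∪ (univ.erase k).biUnion F := by
  ext a
  simp only [mem_compl, mem_union, mem_biUnion, mem_univ, true_and, mem_erase, ne_eq, and_true]
  constructor
  · intro ha
    by_cases h : ∃ k', a ∈ F k'
    · obtain ⟨k', hk'⟩ := h
      exact Or.inr ⟨k', fun hkk => ha (hkk ▸ hk'), hk'⟩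
    · exact Or.inl h
  · rintro (h | ⟨k', hk', ha'⟩) ha
    · exact h ⟨k, ha⟩
    · exact disjoint_left.mp (hF hk') ha' ha

end Finset

namespace ToricBipartite

open Sum Finset Function

variable {m n : ℕ} {E : Fin m → Fin n → Prop} {i i' : Fin m} {j j' : Fin n}
  {A₁ : Finset (Fin m)} {A₂ : Finset (Fin n)}

@[simp] lemma toGraph_adj_inl_inr : (toGraph E).Adj (inl i) (inr j) ↔ E i j := by
  simp [toGraph]

@[simp] lemma toGraph_adj_inr_inl : (toGraph E).Adj (inr j) (inl i) ↔ E i j := by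
  simp [toGraph]

@[simp] lemma not_toGraph_adj_inl_inl : ¬ (toGraph E).Adj (inl i) (inl i') := by
  simp [toGraph]

@[simp] lemma not_toGraph_adj_inr_inr : ¬ (toGraph E).Adj (inr j) (inr j') := by
  simp [toGraph]

def sumSet (S : Finset (Fin m)) (T : Finset (Fin n)) : Set (Fin m ⊕ Fin n) :=
  inl '' (S : Set (Fin m)) ∪ inr '' (T : Set (Fin n))

@[simp] lemma inl_mem_sumSet {S : Finset (Fin m)} {T : Finset (Fin n)} :
    inl i ∈ sumSet S T ↔ i ∈ S := by
  simp [sumSet]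

@[simp] lemma inr_mem_sumSet {S : Finset (Fin m)} {T : Finset (Fin n)} :
    inr j ∈ sumSet S T ↔ j ∈ T := by
  simp [sumSet]

lemma compl_sumSet (S : Finset (Fin m)) (T : Finset (Fin n)) : (sumSet S T)ᶜ = sumSet Sᶜ Tᶜ := by
  ext (i | j) <;> simp

lemma sumSet_union (S S' : Finset (Fin m)) (T T' : Finset (Fin n)) :
    sumSet (S ∪ S') (T ∪ T') = sumSet S T ∪ sumSet S' T' := by
  ext (i | j) <;> simp

lemma sumSet_biUnion {ι : Type*} [DecidableEq ι] (s : Finset ι) (X : ι → Finset (Fin m))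
    (Y : ι → Finset (Fin n)) :
    sumSet (s.biUnion X) (s.biUnion Y) = ⋃ k ∈ (s : Set ι), sumSet (X k) (Y k) := by
  ext (i | j) <;> simp

lemma inducedConnected_iff {S : Finset (Fin m)} {T : Finset (Fin n)} :
    InducedConnected E S T ↔ ((toGraph E).induce (sumSet S T)).Connected :=
  Iff.rfl

lemma exists_adj_of_connected (hconn : (toGraph E).Connected) [Nontrivial (Fin m ⊕ Fin n)]
    (i : Fin m) : ∃ j, E i j := by
  obtain ⟨i' | j, h⟩ := hconn.preconnected.exists_adj_of_nontrivial (inl i)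
  · simp at h
  · exact ⟨j, by simpa using h⟩

lemma InIStar.ne_univ (h : InIStar E A₁ A₂) (hA₁ : A₁.Nonempty) : A₁ ≠ univ := by
  rcases h with h | ⟨-, -, ⟨v, rfl⟩, -⟩ | ⟨rfl, -⟩
  · exact h.1.2.1
  · exact fun h => by simpa using eq_univ_iff_forall.mp h v
  · exact (not_nonempty_empty hA₁).elim

variable [∀ i j, Decidable (E i j)]

@[simp] lemma mem_nbrR {A : Finset (Fin m)} : j ∈ nbrR E A ↔ ∃ i ∈ A, E i j := by
  simp [nbrR]

lemma nbrR_mono {A B : Finset (Fin m)} (h : A ⊆ B) : nbrR E A ⊆ nbrR E B := by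
  intro j
  simp only [mem_nbrR]
  exact fun ⟨i, hi, hij⟩ => ⟨i, h hi, hij⟩

lemma nbrR_biUnion {ι : Type*} [DecidableEq ι] (s : Finset ι) (X : ι → Finset (Fin m)) :
    nbrR E (s.biUnion X) = s.biUnion fun k => nbrR E (X k) := by
  ext j
  simp only [mem_nbrR, mem_biUnion]
  tauto

lemma exists_notMem_adj_nbrR (hconn : (toGraph E).Connected) {S : Finset (Fin m)}
    (hS : S.Nonempty) (hSu : S ≠ univ) : ∃ i ∉ S, ∃ j ∈ nbrR E S, E i j := by
  obtain ⟨s, hs⟩ := hS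
  obtain ⟨i, hi⟩ : ∃ i, i ∉ S := by simpa [eq_univ_iff_forall] using hSu
  obtain ⟨p⟩ := hconn.preconnected (inl s) (inl i)
  obtain ⟨⟨⟨a | b, a' | b'⟩, hadj⟩, -, hin, hout⟩ :=
    p.exists_boundary_dart (sumSet S (nbrR E S)) (by simpa) (by simpa)
  all_goals simp only [toGraph_adj_inl_inr, toGraph_adj_inr_inl, not_toGraph_adj_inl_inl,
    not_toGraph_adj_inr_inr, inl_mem_sumSet, inr_mem_sumSet, mem_nbrR] at hadj hin hout
  · exact (hout ⟨a, hin, hadj⟩).elim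
  · exact ⟨a', hout, b, mem_nbrR.mpr hin, hadj⟩

lemma isIndepPair_compl_nbrR (S : Finset (Fin m)) : IsIndepPair E S (nbrR E S)ᶜ :=
  fun i hi _ hj hij => mem_compl.mp hj (mem_nbrR.mpr ⟨i, hi, hij⟩)

lemma IsIndepPair.subset_compl_nbrR (h : IsIndepPair E A₁ A₂) : A₂ ⊆ (nbrR E A₁)ᶜ := by
  intro j hj
  rw [mem_compl, mem_nbrR]
  exact fun ⟨i, hi, hij⟩ => h i hi j hj hij

lemma TwoSidedMaxIndep.eq_compl_nbrR (h : TwoSidedMaxIndep E A₁ A₂) : A₂ = (nbrR E A₁)ᶜ :=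
  (h.2 A₁ _ (isIndepPair_compl_nbrR A₁) subset_rfl h.1.2.2.2.2.subset_compl_nbrR).2.symm

lemma TwoSidedMaxIndep.exists_adj_of_notMem (h : TwoSidedMaxIndep E A₁ A₂) (hi : i ∉ A₁) :
    ∃ j ∈ A₂, E i j := by
  by_contra! hno
  have hind : IsIndepPair E (insert i A₁) A₂ := by
    intro i' hi' j hj
    rcases mem_insert.mp hi' with rfl | hi'
    · exact hno j hj
    · exact h.1.2.2.2.2 i' hi' j hj
  exact hi (insert_eq_self.mp (h.2 _ A₂ hind (subset_insert i A₁) subset_rfl).1)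

lemma twoSidedMaxIndep_compl_nbrR {S : Finset (Fin m)} (hS : S.Nonempty) (hSu : S ≠ univ)
    (hN : (nbrR E S).Nonempty) (hout : ∀ i ∉ S, ∃ j ∉ nbrR E S, E i j) :
    TwoSidedMaxIndep E S (nbrR E S)ᶜ := by
  have hcompl : ((nbrR E S)ᶜ).Nonempty := by
    obtain ⟨i, hi⟩ : ∃ i, i ∉ S := by simpa [eq_univ_iff_forall] using hSu
    obtain ⟨j, hj, -⟩ := hout i hi
    exact ⟨j, mem_compl.mpr hj⟩
  refine ⟨⟨hS, hSu, hcompl, (compl_ne_univ_iff_nonempty _).mpr hN, isIndepPair_compl_nbrR S⟩,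
    fun B₁ B₂ hB hSB hNB => ⟨?_, ?_⟩⟩
  · refine Subset.antisymm (fun i hi => ?_) hSB
    by_contra hiS
    obtain ⟨j, hj, hij⟩ := hout i hiS
    exact hB i hi j (hNB (mem_compl.mpr hj)) hij
  · exact Subset.antisymm (hB.subset_compl_nbrR.trans (compl_subset_compl.mpr (nbrR_mono hSB))) hNB

lemma InIStar.twoSidedMaxIndep_or (h : InIStar E A₁ A₂) (hN : (nbrR E A₁).Nonempty) :
    TwoSidedMaxIndep E A₁ A₂ ∨ A₂ = ∅ ∧ (∃ v, A₁ = {v}ᶜ) ∧ nbrR E A₁ = univ := by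
  rcases h with h | ⟨hA₂, hA₁, hv, hno⟩ | ⟨rfl, -⟩
  · exact Or.inl h
  · refine Or.inr ⟨hA₂, hv, ?_⟩
    by_contra hNu
    refine hno ⟨A₁, (nbrR E A₁)ᶜ, ⟨hA₁, ?_, ?_, ?_, isIndepPair_compl_nbrR A₁⟩, subset_rfl⟩
    · exact InIStar.ne_univ (Or.inr (Or.inl ⟨hA₂, hA₁, hv, hno⟩)) hA₁
    · simpa [eq_univ_iff_forall, Finset.Nonempty] using hNu
    · exact (compl_ne_univ_iff_nonempty _).mpr hN
  · simp [nbrR] at hN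

lemma InIStar.eq_compl_nbrR (h : InIStar E A₁ A₂) (hN : (nbrR E A₁).Nonempty) :
    A₂ = (nbrR E A₁)ᶜ := by
  rcases h.twoSidedMaxIndep_or hN with h | ⟨hA₂, -, hNu⟩
  · exact h.eq_compl_nbrR
  · simp [hA₂, hNu]

lemma assoc_iff_of_nonempty {S : Finset (Fin m)} {T : Finset (Fin n)} (hS : S.Nonempty)
    (hT : T.Nonempty) : assoc E S T i j ↔ E i j ∧ (i ∈ S ∨ j ∈ T) := by
  simp [assoc, hS.ne_empty, hT.ne_empty]

lemma numComponents_assoc_compl_nbrR {S : Finset (Fin m)} (hS : S.Nonempty)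
    (hN : ((nbrR E S)ᶜ).Nonempty) (hc : InducedConnected E S (nbrR E S))
    (hc' : InducedConnected E Sᶜ (nbrR E S)ᶜ) : numComponents (assoc E S (nbrR E S)ᶜ) = 2 := by
  have hadj : ∀ i j, assoc E S (nbrR E S)ᶜ i j ↔ E i j ∧ (i ∈ S ∨ j ∉ nbrR E S) := by
    intro i j
    rw [assoc_iff_of_nonempty hS hN, mem_compl]
  have hcut : ∀ i j, assoc E S (nbrR E S)ᶜ i j → (i ∈ S ↔ j ∈ nbrR E S) := by
    intro i j h
    rw [hadj] at h
    exact ⟨fun hi => mem_nbrR.mpr ⟨i, hi, h.1⟩, fun hj => h.2.resolve_right (not_not.mpr hj)⟩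
  refine SimpleGraph.natCard_connectedComponent_eq_two (W := sumSet S (nbrR E S)) ?_ ?_ ?_
  · rintro (i | j) (i' | j') h <;> simp only [toGraph_adj_inl_inr, toGraph_adj_inr_inl,
      not_toGraph_adj_inl_inl, not_toGraph_adj_inr_inr, inl_mem_sumSet, inr_mem_sumSet] at h ⊢
    exacts [hcut i j' h, (hcut i' j h).symm]
  · refine hc.induce_mono ?_
    rintro (i | j) hu (i' | j') hv h <;> simp_all
  · rw [compl_sumSet]
    refine hc'.induce_mono ?_
    rintro (i | j) hu (i' | j') hv h <;> simp_all

lemma firstIndep_compl_nbrR {S : Finset (Fin m)} (hmax : TwoSidedMaxIndep E S (nbrR E S)ᶜ)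
    (hc : InducedConnected E S (nbrR E S)) (hc' : InducedConnected E Sᶜ (nbrR E S)ᶜ) :
    FirstIndep E S (nbrR E S)ᶜ :=
  ⟨Or.inl hmax, numComponents_assoc_compl_nbrR hmax.1.1 hmax.1.2.2.1 hc hc'⟩

section Partition

variable {ι : Type*} [Fintype ι] [DecidableEq ι] {X : ι → Finset (Fin m)}

lemma mem_of_adj_mem_nbrR (hNdisj : Pairwise (Disjoint on fun k => nbrR E (X k))) {k : ι}
    (hi : i ∈ univ.biUnion X) (hj : j ∈ nbrR E (X k)) (hij : E i j) : i ∈ X k := by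
  obtain ⟨k', -, hk'⟩ := mem_biUnion.mp hi
  obtain rfl : k' = k := by
    by_contra hne
    exact disjoint_left.mp (hNdisj hne) (mem_nbrR.mpr ⟨i, hk', hij⟩) hj
  exact hk'

lemma exists_notMem_biUnion_adj_nbrR (hconn : (toGraph E).Connected)
    (hXne : ∀ k, (X k).Nonempty) (hNdisj : Pairwise (Disjoint on fun k => nbrR E (X k)))
    (hu : univ.biUnion X ≠ univ) (k : ι) :
    ∃ i ∉ univ.biUnion X, ∃ j ∈ nbrR E (X k), E i j := by
  obtain ⟨i, hi, j, hj, hij⟩ := exists_notMem_adj_nbrR hconn (hXne k)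
    (ne_top_of_le_ne_top hu (subset_biUnion_of_mem X (mem_univ k)))
  exact ⟨i, fun h => hi (mem_of_adj_mem_nbrR hNdisj h hj hij), j, hj, hij⟩

lemma exists_adj_compl_nbrR (hstar : InIStar E (univ.biUnion X) A₂)
    (hN : (nbrR E (univ.biUnion X)).Nonempty) (hcase : A₂ ≠ ∅ ∨ Nontrivial ι)
    (hdeg : ∀ i, ∃ j, E i j) (hNdisj : Pairwise (Disjoint on fun k => nbrR E (X k)))
    (hleave : ∀ k, ∃ i ∉ univ.biUnion X, ∃ j ∈ nbrR E (X k), E i j) (k₀ : ι)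
    (hi : i ∉ X k₀) : ∃ j ∉ nbrR E (X k₀), E i j := by
  by_cases hiX : i ∈ univ.biUnion X
  · obtain ⟨j, hij⟩ := hdeg i
    exact ⟨j, fun hj => hi (mem_of_adj_mem_nbrR hNdisj hiX hj hij), hij⟩
  rcases hstar.twoSidedMaxIndep_or hN with hmax | ⟨hA₂, ⟨v, hv⟩, -⟩
  · obtain ⟨j, hj, hij⟩ := hmax.exists_adj_of_notMem hiX
    rw [hmax.eq_compl_nbrR, mem_compl] at hj
    exact ⟨j, fun hj' => hj (nbrR_mono (subset_biUnion_of_mem X (mem_univ k₀)) hj'), hij⟩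
  · -- `i` is the only vertex outside `A₁`, so it is the one that `N(X k)` reaches for `k ≠ k₀`
    have : Nontrivial ι := hcase.resolve_left (not_not.mpr hA₂)
    obtain ⟨k, hk⟩ := exists_ne k₀
    obtain ⟨i', hi', j, hj, hij⟩ := hleave k
    have hiv : ∀ i'', i'' ∉ univ.biUnion X → i'' = v := by simp [hv]
    rw [hiv i hiX, ← hiv i' hi']
    exact ⟨j, disjoint_left.mp (hNdisj hk) hj, hij⟩

lemma inducedConnected_compl_of_partition (hXdisj : Pairwise (Disjoint on X))
    (hNdisj : Pairwise (Disjoint on fun k => nbrR E (X k)))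
    (hXconn : ∀ k, InducedConnected E (X k) (nbrR E (X k)))
    (hrest : InducedConnected E (univ.biUnion X)ᶜ (nbrR E (univ.biUnion X))ᶜ)
    (hleave : ∀ k, ∃ i ∉ univ.biUnion X, ∃ j ∈ nbrR E (X k), E i j) (k₀ : ι) :
    InducedConnected E (X k₀)ᶜ (nbrR E (X k₀))ᶜ := by
  rw [inducedConnected_iff, compl_eq_compl_biUnion_union_biUnion_erase hXdisj k₀,
    compl_eq_compl_biUnion_union_biUnion_erase hNdisj k₀, sumSet_union, sumSet_biUnion,
    ← nbrR_biUnion]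
  refine SimpleGraph.induce_union_biUnion_connected hrest
    (fun k _ => (hXconn k).preconnected) fun k _ => ?_
  obtain ⟨i, hi, j, hj, hij⟩ := hleave k
  exact ⟨inl i, by simpa using hi, inr j, by simpa using hj, by simpa using hij⟩

end Partition

theorem component_sets_are_first_indep_general (m n : ℕ) (E : Fin m → Fin n → Prop)
    [∀ i j, Decidable (E i j)] (hconn : (toGraph E).Connected)
    (A₁ : Finset (Fin m)) (A₂ : Finset (Fin n))
    (hstar : InIStar E A₁ A₂)
    (d : ℕ) (X : Fin d → Finset (Fin m))
    (hXne : ∀ i, (X i).Nonempty)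
    (hXdisj : ∀ i j, i ≠ j → Disjoint (X i) (X j))
    (hXunion : Finset.univ.biUnion X = A₁)
    (hNdisj : ∀ i j, i ≠ j → Disjoint (nbrR E (X i)) (nbrR E (X j)))
    (hXconn : ∀ i, InducedConnected E (X i) (nbrR E (X i)))
    (hrest : InducedConnected E A₁ᶜ (nbrR E A₁)ᶜ)
    (hcase : A₂ ≠ ∅ ∨ 2 ≤ d) :
    ∀ i : Fin d,
      TwoSidedMaxIndep E (X i)
        (A₂ ∪ (Finset.univ.erase i).biUnion fun j => nbrR E (X j)) ∧
      FirstIndep E (X i)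
        (A₂ ∪ (Finset.univ.erase i).biUnion fun j => nbrR E (X j)) := by
  intro k₀
  subst hXunion
  have hXsub : X k₀ ⊆ univ.biUnion X := subset_biUnion_of_mem X (mem_univ k₀)
  have hA₁ : (univ.biUnion X).Nonempty := (hXne k₀).mono hXsub
  have hA₁u := hstar.ne_univ hA₁
  obtain ⟨a, ha⟩ := hA₁
  obtain ⟨a', ha'⟩ : ∃ a', a' ∉ univ.biUnion X := by simpa [eq_univ_iff_forall] using hA₁u
  have : Nontrivial (Fin m ⊕ Fin n) := ⟨inl a, inl a', by rintro ⟨⟩; exact ha' ha⟩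
  have hdeg := exists_adj_of_connected hconn
  have hN : ∀ S : Finset (Fin m), S.Nonempty → (nbrR E S).Nonempty := fun S ⟨i, hi⟩ =>
    (hdeg i).imp fun _ hij => mem_nbrR.mpr ⟨i, hi, hij⟩
  have hleave := exists_notMem_biUnion_adj_nbrR hconn hXne hNdisj hA₁u
  have hT : A₂ ∪ (univ.erase k₀).biUnion (fun k => nbrR E (X k)) = (nbrR E (X k₀))ᶜ := by
    rw [hstar.eq_compl_nbrR (hN _ ⟨a, ha⟩), nbrR_biUnion,
      compl_eq_compl_biUnion_union_biUnion_erase hNdisj k₀]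
  have hmax : TwoSidedMaxIndep E (X k₀) (nbrR E (X k₀))ᶜ :=
    twoSidedMaxIndep_compl_nbrR (hXne k₀) (ne_top_of_le_ne_top hA₁u hXsub) (hN _ (hXne k₀))
      fun i hi => exists_adj_compl_nbrR hstar (hN _ ⟨a, ha⟩)
        (hcase.imp_right Fin.nontrivial_iff_two_le.mpr) hdeg hNdisj hleave k₀ hi
  rw [hT]
  exact ⟨hmax, firstIndep_compl_nbrR hmax (hXconn k₀)
    (inducedConnected_compl_of_partition hXdisj hNdisj hXconn hrest hleave k₀)⟩

/-- Let `A = A₁ ⊔ A₂ ∈ I_G^(*)` with `A₁ ≠ ∅`. Suppose `G[A₁ ⊔ N(A₁)]`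
has exactly `d` connected components, with vertex sets `X i ⊔ N(X i)` (so the `X i` are
nonempty, partition `A₁`, have pairwise disjoint neighbourhoods, and each
`G[X i ⊔ N(X i)]` is connected), that `G[(U₁ ∖ A₁) ⊔ (U₂ ∖ N(A₁))]` is connected, and
that `A₂ ≠ ∅` or `d ≥ 2`. Then for each `i`, the set
`C^i = X i ⊔ (A₂ ∪ ⋃_{j ≠ i} N(X j))` is a two-sided maximal independent set of `G`
whose associated subgraph has exactly two connected components, i.e. `C^i ∈ I_G^(1)`. -/
theorem component_sets_are_first_indep (m n : ℕ) (E : Fin m → Fin n → Prop)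
    [∀ i j, Decidable (E i j)] (hconn : (toGraph E).Connected)
    (A₁ : Finset (Fin m)) (A₂ : Finset (Fin n)) (hA₁ : A₁.Nonempty)
    (hstar : InIStar E A₁ A₂)
    (d : ℕ) (X : Fin d → Finset (Fin m))
    (hXne : ∀ i, (X i).Nonempty)
    (hXdisj : ∀ i j, i ≠ j → Disjoint (X i) (X j))
    (hXunion : Finset.univ.biUnion X = A₁)
    (hNdisj : ∀ i j, i ≠ j → Disjoint (nbrR E (X i)) (nbrR E (X j)))
    (hXconn : ∀ i, InducedConnected E (X i) (nbrR E (X i)))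
    (hrest : InducedConnected E A₁ᶜ (nbrR E A₁)ᶜ)
    (hcase : A₂ ≠ ∅ ∨ 2 ≤ d) :
    ∀ i : Fin d,
      TwoSidedMaxIndep E (X i)
        (A₂ ∪ (Finset.univ.erase i).biUnion fun j => nbrR E (X j)) ∧
      FirstIndep E (X i)
        (A₂ ∪ (Finset.univ.erase i).biUnion fun j => nbrR E (X j)) :=
  component_sets_are_first_indep_general m n E hconn A₁ A₂ hstar d X hXne hXdisj hXunion hNdisj
    hXconn hrest hcase

end ToricBipartite
end

section
/- Let G ⊆ K_{m,n} be a connected bipartite graph and let S be a nonempty finite set of first independent sets of G. Let G[S] := ⋂_{A∈S} G{A} be the intersection subgraph, the spanning subgraph of G whose edges are exactly the edges belonging to every associated subgraph G{A}, A ∈ S. Then ⋂_{A∈S} (H_A ∩ σ_G^∨) equals the convex cone generated by {e^i + f^j : (i, m+j) ∈ E(G[S])}. -/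
/-!
Common setup: a bipartite graph `G ⊆ K_{m,n}` is encoded by an edge relation
`E : Fin m → Fin n → Prop` (vertex set `V = Fin m ⊕ Fin n`, with `U₁` the left
summand and `U₂` the right summand).
-/

namespace ToricBipartite

open Sum Finset

variable {m n : ℕ}

/-!
For `A ∈ I_G^(*)`, the hyperplane `H_A` is the zero set of the linear form
`x ↦ Σ_{v ∈ A₁} x_v - Σ_{v ∈ N(A₁)} x_v` (or its analogue for `A₂`). Every generator
`e^i + f^j` of `σ_G^∨` has value `0` or `-1` under this form, and value `0` exactly on the edges
of `G{A}`; for a two-sided `A` this uses that maximality forces `A₂ = U₂ ∖ N(A₁)`. Hence a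
nonnegative combination of generators lies in `H_A` iff it only uses edges of `G{A}`. Applying
this to one fixed representation of `x ∈ σ_G^∨` for all `A ∈ S` at once gives the theorem.
-/

theorem LinearMap.map_sum_sum_smul_eq_zero_iff {α β V : Type*} [Fintype α] [Fintype β]
    [AddCommGroup V] [Module ℝ V] (φ : V →ₗ[ℝ] ℝ) (g : α → β → V) {c : α → β → ℝ}
    (hc : ∀ i j, 0 ≤ c i j) (hφ : ∀ i j, c i j ≠ 0 → φ (g i j) ≤ 0) :
    φ (∑ i, ∑ j, c i j • g i j) = 0 ↔ ∀ i j, c i j ≠ 0 → φ (g i j) = 0 := by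
  have hterm : ∀ i j, c i j * φ (g i j) ≤ 0 := fun i j => by
    by_cases h : c i j = 0
    · simp [h]
    · exact mul_nonpos_of_nonneg_of_nonpos (hc i j) (hφ i j h)
  have hrow : ∀ i ∈ (univ : Finset α), ∑ j, c i j * φ (g i j) ≤ 0 :=
    fun i _ => sum_nonpos fun j _ => hterm i j
  simp only [map_sum, map_smul, smul_eq_mul, sum_eq_zero_iff_of_nonpos hrow,
    sum_eq_zero_iff_of_nonpos fun j _ => hterm _ j, mem_univ, true_implies, mul_eq_zero]
  exact forall₂_congr fun i j => or_iff_not_imp_left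

lemma mem_nbrR_iff (E : Fin m → Fin n → Prop) [∀ i j, Decidable (E i j)]
    (A : Finset (Fin m)) (j : Fin n) : j ∈ nbrR E A ↔ ∃ i ∈ A, E i j := by
  simp [nbrR]

lemma mem_nbrL_iff (E : Fin m → Fin n → Prop) [∀ i j, Decidable (E i j)]
    (B : Finset (Fin n)) (i : Fin m) : i ∈ nbrL E B ↔ ∃ j ∈ B, E i j := by
  simp [nbrL]

lemma TwoSidedMaxIndep.eq_compl_nbrR_s12 {E : Fin m → Fin n → Prop} [∀ i j, Decidable (E i j)]
    {A₁ : Finset (Fin m)} {A₂ : Finset (Fin n)} (h : TwoSidedMaxIndep E A₁ A₂) :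
    A₂ = (nbrR E A₁)ᶜ := by
  obtain ⟨⟨-, -, -, -, hind⟩, hmax⟩ := h
  ext j
  rw [mem_compl, mem_nbrR_iff]
  constructor
  · rintro hj ⟨i, hi, hij⟩
    exact hind i hi j hj hij
  · intro hj
    have hind' : IsIndepPair E A₁ (insert j A₂) := by
      intro i hi j' hj'
      rcases mem_insert.mp hj' with rfl | hj'
      · exact fun hij => hj ⟨i, hi, hij⟩
      · exact hind i hi j' hj'
    rw [← (hmax A₁ _ hind' subset_rfl (subset_insert j A₂)).2]
    exact mem_insert_self j A₂

lemma InIStar.eq_compl_nbrR_s12 {E : Fin m → Fin n → Prop} [∀ i j, Decidable (E i j)]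
    {A₁ : Finset (Fin m)} {A₂ : Finset (Fin n)} (h : InIStar E A₁ A₂)
    (h₁ : A₁ ≠ ∅) (h₂ : A₂ ≠ ∅) : A₂ = (nbrR E A₁)ᶜ := by
  rcases h with h | ⟨h, -⟩ | ⟨h, -⟩
  · exact h.eq_compl_nbrR_s12
  · exact absurd h h₂
  · exact absurd h h₁

section Functionals

variable (E : Fin m → Fin n → Prop) [∀ i j, Decidable (E i j)]

def leftForm (A : Finset (Fin m)) : ((Fin m ⊕ Fin n) → ℝ) →ₗ[ℝ] ℝ :=
  ∑ i ∈ A, LinearMap.proj (inl i) - ∑ j ∈ nbrR E A, LinearMap.proj (inr j)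

def rightForm (B : Finset (Fin n)) : ((Fin m ⊕ Fin n) → ℝ) →ₗ[ℝ] ℝ :=
  ∑ j ∈ B, LinearMap.proj (inr j) - ∑ i ∈ nbrL E B, LinearMap.proj (inl i)

def hypForm (A₁ : Finset (Fin m)) (A₂ : Finset (Fin n)) : ((Fin m ⊕ Fin n) → ℝ) →ₗ[ℝ] ℝ :=
  if A₁ = ∅ then rightForm E A₂ else leftForm E A₁

lemma mem_hypA_iff (A₁ : Finset (Fin m)) (A₂ : Finset (Fin n)) (x : (Fin m ⊕ Fin n) → ℝ) :
    x ∈ hypA E A₁ A₂ ↔ hypForm E A₁ A₂ x = 0 := by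
  unfold hypA hypForm leftForm rightForm
  split_ifs <;> simp [hyp1, hyp2, sub_eq_zero]

lemma leftForm_gen (A : Finset (Fin m)) (i : Fin m) (j : Fin n) :
    leftForm E A (gen i j) = (if i ∈ A then 1 else 0) - (if j ∈ nbrR E A then 1 else 0) := by
  simp [leftForm, gen, Pi.single_apply]

lemma rightForm_gen (B : Finset (Fin n)) (i : Fin m) (j : Fin n) :
    rightForm E B (gen i j) = (if j ∈ B then 1 else 0) - (if i ∈ nbrL E B then 1 else 0) := by
  simp [rightForm, gen, Pi.single_apply]

variable {E}

lemma leftForm_gen_nonpos {A : Finset (Fin m)} {i : Fin m} {j : Fin n} (hij : E i j) :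
    leftForm E A (gen i j) ≤ 0 := by
  have : i ∈ A → j ∈ nbrR E A := fun hi => (mem_nbrR_iff E A j).2 ⟨i, hi, hij⟩
  rw [leftForm_gen]
  split_ifs <;> simp_all

lemma leftForm_gen_eq_zero_iff {A : Finset (Fin m)} {i : Fin m} {j : Fin n} (hij : E i j) :
    leftForm E A (gen i j) = 0 ↔ i ∈ A ∨ j ∉ nbrR E A := by
  have : i ∈ A → j ∈ nbrR E A := fun hi => (mem_nbrR_iff E A j).2 ⟨i, hi, hij⟩
  rw [leftForm_gen]
  split_ifs <;> simp_all

lemma rightForm_gen_nonpos {B : Finset (Fin n)} {i : Fin m} {j : Fin n} (hij : E i j) :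
    rightForm E B (gen i j) ≤ 0 := by
  have : j ∈ B → i ∈ nbrL E B := fun hj => (mem_nbrL_iff E B i).2 ⟨j, hj, hij⟩
  rw [rightForm_gen]
  split_ifs <;> simp_all

lemma rightForm_gen_eq_zero_iff {B : Finset (Fin n)} {i : Fin m} {j : Fin n} (hij : E i j) :
    rightForm E B (gen i j) = 0 ↔ j ∈ B ∨ i ∉ nbrL E B := by
  have : j ∈ B → i ∈ nbrL E B := fun hj => (mem_nbrL_iff E B i).2 ⟨j, hj, hij⟩
  rw [rightForm_gen]
  split_ifs <;> simp_all

lemma hypForm_gen_nonpos {A₁ : Finset (Fin m)} {A₂ : Finset (Fin n)} {i : Fin m} {j : Fin n}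
    (hij : E i j) : hypForm E A₁ A₂ (gen i j) ≤ 0 := by
  unfold hypForm
  split_ifs
  exacts [rightForm_gen_nonpos hij, leftForm_gen_nonpos hij]

lemma hypForm_gen_eq_zero_iff {A₁ : Finset (Fin m)} {A₂ : Finset (Fin n)} (hA : InIStar E A₁ A₂)
    {i : Fin m} {j : Fin n} (hij : E i j) :
    hypForm E A₁ A₂ (gen i j) = 0 ↔ assoc E A₁ A₂ i j := by
  unfold hypForm assoc
  by_cases h₁ : A₁ = ∅ <;> by_cases h₂ : A₂ = ∅
  · simp [h₁, h₂, rightForm_gen_eq_zero_iff hij, mem_nbrL_iff, mem_nbrR_iff, hij]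
  · simp [h₁, h₂, rightForm_gen_eq_zero_iff hij, hij]
  · simp [h₁, h₂, leftForm_gen_eq_zero_iff hij, hij]
  · simp [h₁, leftForm_gen_eq_zero_iff hij, hij, hA.eq_compl_nbrR_s12 h₁ h₂]

end Functionals

lemma sum_smul_gen_mem_hypA_iff {E : Fin m → Fin n → Prop} [∀ i j, Decidable (E i j)]
    {A₁ : Finset (Fin m)} {A₂ : Finset (Fin n)} (hA : InIStar E A₁ A₂) {c : Fin m → Fin n → ℝ}
    (hc : ∀ i j, 0 ≤ c i j) (hcE : ∀ i j, c i j ≠ 0 → E i j) :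
    ∑ i, ∑ j, c i j • gen i j ∈ hypA E A₁ A₂ ↔ ∀ i j, c i j ≠ 0 → assoc E A₁ A₂ i j := by
  rw [mem_hypA_iff, LinearMap.map_sum_sum_smul_eq_zero_iff _ _ hc
    fun i j h => hypForm_gen_nonpos (hcE i j h)]
  exact forall₂_congr fun i j => forall_congr' fun hc => hypForm_gen_eq_zero_iff hA (hcE i j hc)

theorem iInter_facets_eq_dualEdgeCone_general (m n : ℕ) (E : Fin m → Fin n → Prop)
    [∀ i j, Decidable (E i j)]
    (ι : Type) [Nonempty ι]
    (F₁ : ι → Finset (Fin m)) (F₂ : ι → Finset (Fin n))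
    (hF : ∀ a, FirstIndep E (F₁ a) (F₂ a)) :
    (⋂ a, (hypA E (F₁ a) (F₂ a) ∩ dualEdgeCone E)) =
      dualEdgeCone (fun i j => ∀ a, assoc E (F₁ a) (F₂ a) i j) := by
  ext x
  simp only [Set.mem_iInter, Set.mem_inter_iff]
  constructor
  · intro hx
    obtain ⟨c, hc, hcE, rfl⟩ := (hx (Classical.arbitrary ι)).2
    exact ⟨c, hc, fun i j hcij a =>
      (sum_smul_gen_mem_hypA_iff (hF a).1 hc hcE).1 (hx a).1 i j hcij, rfl⟩
  · rintro ⟨c, hc, hcS, rfl⟩ a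
    have hcE : ∀ i j, c i j ≠ 0 → E i j := fun i j h => (hcS i j h a).1
    exact ⟨(sum_smul_gen_mem_hypA_iff (hF a).1 hc hcE).2 fun i j h => hcS i j h a,
      c, hc, hcE, rfl⟩

/-- Let `S` be a nonempty finite family of first independent sets of a
connected bipartite graph `G ⊆ K_{m,n}`, and let `G[S] = ⋂_{A ∈ S} G{A}` be the
intersection subgraph. Then `⋂_{A ∈ S} (H_A ∩ σ_G^∨)` equals the convex cone generated
by `{e^i + f^j : (i, m+j) ∈ E(G[S])}`, i.e. the dual edge cone of `G[S]`. -/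
theorem iInter_facets_eq_dualEdgeCone (m n : ℕ) (E : Fin m → Fin n → Prop)
    [∀ i j, Decidable (E i j)] (hconn : (toGraph E).Connected)
    (ι : Type) [Fintype ι] [Nonempty ι]
    (F₁ : ι → Finset (Fin m)) (F₂ : ι → Finset (Fin n))
    (hF : ∀ a, FirstIndep E (F₁ a) (F₂ a)) :
    (⋂ a, (hypA E (F₁ a) (F₂ a) ∩ dualEdgeCone E)) =
      dualEdgeCone (fun i j => ∀ a, assoc E (F₁ a) (F₂ a) i j) :=
  iInter_facets_eq_dualEdgeCone_general m n E ι F₁ F₂ hF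

end ToricBipartite
end
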